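/- arXiv:1310.1036 — 3 statements merged into one kernel-verified Lean document; each statement's English description precedes it below -/
import Mathlib

section
/- Preservation of logical information: for every two-qubit Pauli operator P = P₁ ⊗ P₂ (Pᵢ ∈ {I, X, Y, Z}) with logical counterpart P̄ = P̄₁ P̄₂, every two-qubit state |Ψ⟩ on the qubits A1, A2, every density matrix ρ_D on the D-qubits, and every t ≥ 0, one has tr(P̄ · e^{tL}(ρ₀)) = ⟨Ψ| P |Ψ⟩, where ρ₀ is the initial state built from |Ψ⟩ and ρ_D. -/
open scoped Matrix ComplexOrder

attribute [local instance] Matrix.normedAddCommGroup Matrix.normedSpace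

namespace Toric

variable (L : ℕ) [NeZero L]

/-- Vertices of the periodic `L × L` lattice. -/
abbrev V := ZMod L × ZMod L

/-- Edges: `(v, 0)` is the horizontal edge from `v` to `v + (1,0)`,
`(v, 1)` the vertical edge from `v` to `v + (0,1)`. -/
abbrev E := V L × Fin 2

/-- Operators on the `2L²` qubits: complex matrices indexed by `E → Fin 2`. -/
abbrev Op := Matrix (E L → Fin 2) (E L → Fin 2) ℂ

/-- Pauli `X` on edge `e`. -/
noncomputable def Xop (e : E L) : Op L := fun σ τ =>
  if τ e = 1 - σ e ∧ ∀ e' ≠ e, τ e' = σ e' then 1 else 0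

/-- Pauli `Z` on edge `e`. -/
noncomputable def Zop (e : E L) : Op L :=
  Matrix.diagonal fun σ => (-1 : ℂ) ^ (σ e : ℕ)

/-- Vertex stabilizer at `v`. -/
noncomputable def Sv (v : V L) : Op L :=
  Xop L (v, 0) * Xop L (v, 1) * Xop L (v - (1, 0), 0) * Xop L (v - (0, 1), 1)

/-- Plaquette stabilizer with south-west corner `v`. -/
noncomputable def Sp (v : V L) : Op L :=
  Zop L (v, 0) * Zop L (v, 1) * Zop L (v + (1, 0), 1) * Zop L (v + (0, 1), 0)

/-- Index set of stabilizer generators: `inl v` is the vertex generator at `v`,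
`inr v` is the plaquette generator `p(v)`. -/
abbrev Gen := V L ⊕ V L

/-- The stabilizer associated with a generator index. -/
noncomputable def stab : Gen L → Op L
  | Sum.inl v => Sv L v
  | Sum.inr v => Sp L v

/-- The starred vertex `v* = (1,1)`. -/
def vStar : Gen L := Sum.inl (1, 1)

/-- The starred plaquette `p* = p(0,0)`. -/
def pStar : Gen L := Sum.inr (0, 0)

/-- The correction operators. -/
noncomputable def corr : Gen L → Op L
  | Sum.inl (r, s) =>
      if (r, s) = ((1 : ZMod L), (1 : ZMod L)) then 1
      else if s ≠ 1 then Zop L ((r, s - 1), 1)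
      else Zop L ((r - 1, 1), 0)
  | Sum.inr (r, s) =>
      if (r, s) = ((0 : ZMod L), (0 : ZMod L)) then 1
      else if s ≠ 0 then Xop L ((r, s + 1), 0)
      else Xop L ((r + 1, 0), 1)

/-- `P_j^+ = (I + S_j)/2`. -/
noncomputable def Pplus (j : Gen L) : Op L := (2⁻¹ : ℂ) • (1 + stab L j)

/-- `P_j^- = (I - S_j)/2`. -/
noncomputable def Pminus (j : Gen L) : Op L := (2⁻¹ : ℂ) • (1 - stab L j)

/-- The correction channel `T_j(ρ) = P_j⁺ ρ P_j⁺ + C_j P_j⁻ ρ P_j⁻ C_j†` as a linear map. -/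
noncomputable def Tj (j : Gen L) : Op L →ₗ[ℂ] Op L :=
  LinearMap.comp (LinearMap.mulLeft ℂ (Pplus L j)) (LinearMap.mulRight ℂ (Pplus L j)) +
  LinearMap.comp (LinearMap.mulLeft ℂ (corr L j * Pminus L j))
    (LinearMap.mulRight ℂ (Pminus L j * (corr L j)ᴴ))

/-- The Liouvillian `L(ρ) = Σ_j (T_j(ρ) - ρ)`. -/
noncomputable def Liou : Op L →ₗ[ℂ] Op L :=
  ∑ j : Gen L, (Tj L j - LinearMap.id)

/-- The evolution `e^{tL}`. -/
noncomputable def expL (t : ℝ) : Op L →L[ℂ] Op L :=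
  @NormedSpace.exp _ _ _
    (by exact @NonUnitalSeminormedRing.toIsTopologicalRing _ (ContinuousLinearMap.toSeminormedRing (E := Op L) (𝕜 := ℂ)).toNonUnitalSeminormedRing)
    ((t : ℂ) • (Liou L).toContinuousLinearMap)

/-- Product of a finite family of (commuting) operators, taken in some fixed enumeration order. -/
noncomputable def listProd {ι : Type*} [Fintype ι] (f : ι → Op L) : Op L :=
  ((Finset.univ : Finset ι).toList.map f).prod

/-- Logical `X̄₁`. -/
noncomputable def X1bar : Op L := listProd L fun s : ZMod L => Xop L ((0, s), 0)

/-- Logical `Z̄₁`. -/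
noncomputable def Z1bar : Op L := listProd L fun r : ZMod L => Zop L ((r, 1), 0)

/-- Logical `X̄₂`. -/
noncomputable def X2bar : Op L := listProd L fun r : ZMod L => Xop L ((r, 0), 1)

/-- Logical `Z̄₂`. -/
noncomputable def Z2bar : Op L := listProd L fun s : ZMod L => Zop L ((1, s), 1)

/-- The single-qubit Pauli matrices `I, X, Y, Z`. -/
noncomputable def pauli : Fin 4 → Matrix (Fin 2) (Fin 2) ℂ :=
  ![1, !![0, 1; 1, 0], !![0, -Complex.I; Complex.I, 0], !![1, 0; 0, -1]]

/-- Logical counterparts `Ī, X̄₁, Ȳ₁, Z̄₁` on the first logical qubit. -/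
noncomputable def logical1 : Fin 4 → Op L :=
  ![1, X1bar L, Complex.I • (X1bar L * Z1bar L), Z1bar L]

/-- Logical counterparts `Ī, X̄₂, Ȳ₂, Z̄₂` on the second logical qubit. -/
noncomputable def logical2 : Fin 4 → Op L :=
  ![1, X2bar L, Complex.I • (X2bar L * Z2bar L), Z2bar L]

/-- Logical counterpart `P̄ = P̄₁ P̄₂` of the two-qubit Pauli indexed by `(a, b)`. -/
noncomputable def logicalP (a b : Fin 4) : Op L := logical1 L a * logical2 L b

/-- `⟨Ψ| P₁ ⊗ P₂ |Ψ⟩` for the two-qubit Pauli indexed by `(a, b)`. -/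
noncomputable def expval (Ψ : Fin 2 → Fin 2 → ℂ) (a b : Fin 4) : ℂ :=
  ∑ x : Fin 2, ∑ x' : Fin 2, ∑ y : Fin 2, ∑ y' : Fin 2,
    (starRingEnd ℂ) (Ψ x y) * pauli a x x' * pauli b y y' * Ψ x' y'

/-- The qubit `A₁`. -/
def A1 : E L := (((0 : ZMod L), (1 : ZMod L)), 0)

/-- The qubit `A₂`. -/
def A2 : E L := (((1 : ZMod L), (0 : ZMod L)), 1)

/-- The qubits `B = {((0,s),0) : s ≠ 1}`. -/
def Bfin : Finset (E L) :=
  (Finset.univ.filter fun s : ZMod L => s ≠ 1).image fun s => (((0 : ZMod L), s), (0 : Fin 2))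

/-- The qubits `C = {((r,1),0) : r ≠ 0}`. -/
def Cfin : Finset (E L) :=
  (Finset.univ.filter fun r : ZMod L => r ≠ 0).image fun r => ((r, (1 : ZMod L)), (0 : Fin 2))

/-- The qubits `B' = {((r,0),1) : r ≠ 1}`. -/
def B'fin : Finset (E L) :=
  (Finset.univ.filter fun r : ZMod L => r ≠ 1).image fun r => ((r, (0 : ZMod L)), (1 : Fin 2))

/-- The qubits `C' = {((1,s),1) : s ≠ 0}`. -/
def C'fin : Finset (E L) :=
  (Finset.univ.filter fun s : ZMod L => s ≠ 0).image fun s => (((1 : ZMod L), s), (1 : Fin 2))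

/-- The remaining qubits `D`. -/
def Dfin : Finset (E L) :=
  Finset.univ \ ({A1 L, A2 L} ∪ Bfin L ∪ B'fin L ∪ Cfin L ∪ C'fin L)

/-- The initial state `ρ₀`: `|Ψ⟩⟨Ψ|` on `A₁A₂`, `|+⟩⟨+|` on `B ∪ B'`, `|0⟩⟨0|` on `C ∪ C'`,
and the arbitrary state `ρ_D` on the remaining qubits `D`. -/
noncomputable def rho0 (Ψ : Fin 2 → Fin 2 → ℂ)
    (ρD : Matrix ({e // e ∈ Dfin L} → Fin 2) ({e // e ∈ Dfin L} → Fin 2) ℂ) : Op L :=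
  fun σ τ =>
    Ψ (σ (A1 L)) (σ (A2 L)) * (starRingEnd ℂ) (Ψ (τ (A1 L)) (τ (A2 L))) *
    (∏ _e ∈ Bfin L ∪ B'fin L, (2⁻¹ : ℂ)) *
    (∏ e ∈ Cfin L ∪ C'fin L, if σ e = 0 ∧ τ e = 0 then (1 : ℂ) else 0) *
    ρD (fun d => σ d.1) (fun d => τ d.1)

/-- The projection `Q` onto the code space. -/
noncomputable def Qproj : Op L := listProd L fun j : Gen L => Pplus L j

/-- The projection `Q⊥ = I - Q` onto the orthogonal complement of the code space. -/
noncomputable def Qperp : Op L := 1 - Qproj L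

end Toric

/-- The trace norm `‖A‖₁ = tr √(AᴴA)`. -/
noncomputable def traceNorm {m : Type*} [Fintype m] [DecidableEq m] (A : Matrix m m ℂ) : ℝ :=
  (((Matrix.posSemidef_conjTranspose_mul_self A).1.eigenvectorUnitary.1 *
      Matrix.diagonal ((fun x : ℝ => (x : ℂ)) ∘ (√·) ∘ (Matrix.posSemidef_conjTranspose_mul_self A).1.eigenvalues) *
      (star (Matrix.posSemidef_conjTranspose_mul_self A).1.eigenvectorUnitary : Matrix m m ℂ)).trace).re

/-!
Every operator in sight is, up to a phase, a Pauli string `Z^z X^x` with `x z : E → 𝔽₂`, and two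
Pauli strings commute iff `z' ⬝ᵥ x = z ⬝ᵥ x'`. The `Z`-strings of the logical operators meet every
vertex star, and their `X`-strings every plaquette, in an even number of edges; moreover they avoid
every correction edge (this is why `p*` and `v*` get no correction). So `P̄` commutes with all `S_j`
and `C_j`. By cyclicity of the trace `tr (P̄ T_j ρ) = tr (P̄ ρ)`, so the functional
`ρ ↦ tr (P̄ ρ)` kills `L` and is therefore invariant under `e^{tL}`. Finally the `X`-part of `P̄` lives on `A₁, A₂, B, B'`, where `ρ₀` is `|+⟩⟨+|`, and
its `Z`-part on `A₁, A₂, C, C'`, where `ρ₀` is `|0⟩⟨0|`; summing out `B, B', C, C', D` in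
`tr (P̄ ρ₀)` leaves `⟨Ψ|P|Ψ⟩`.
-/

open Matrix Fin.CommRing
open scoped CharTwo

section PauliString

def parity (a : Fin 2) : ℂ := (-1) ^ (a : ℕ)

@[simp] lemma parity_zero : parity 0 = 1 := pow_zero _

@[simp] lemma parity_one : parity 1 = -1 := pow_one _

lemma parity_add (a b : Fin 2) : parity (a + b) = parity a * parity b := by
  fin_cases a <;> fin_cases b <;> simp [parity]

@[simp] lemma parity_mul_self (a : Fin 2) : parity a * parity a = 1 := by
  rw [← parity_add, CharTwo.add_self_eq_zero, parity_zero]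

@[simp] lemma star_parity (a : Fin 2) : star (parity a) = parity a := by
  fin_cases a <;> simp

lemma Pi.add_self_fin_two {ι : Type*} (x : ι → Fin 2) : x + x = 0 :=
  funext fun _ => CharTwo.add_self_eq_zero _

lemma sum_pi_single_one_of_injective {ι κ : Type*} [DecidableEq ι] [Fintype κ] {g : κ → ι}
    (hg : Function.Injective g) :
    ∑ k, (Pi.single (g k) 1 : ι → Fin 2) = fun i => if ∃ k, g k = i then 1 else 0 := by
  funext i
  rw [Finset.sum_apply]
  split_ifs with h
  · obtain ⟨k, rfl⟩ := h
    rw [Finset.sum_eq_single k (fun k' _ hk' => by simp [hg.ne hk']) (by simp)]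
    simp
  · exact Finset.sum_eq_zero fun k _ => Pi.single_eq_of_ne (fun he => h ⟨k, he.symm⟩) _

variable {ι : Type*} [Fintype ι] [DecidableEq ι]

/-- The Pauli string `Z^z X^x` on qubits indexed by `ι`. -/
def pauliString (x z : ι → Fin 2) : Matrix (ι → Fin 2) (ι → Fin 2) ℂ :=
  Matrix.of fun σ τ => if τ = σ + x then parity (z ⬝ᵥ σ) else 0

omit [DecidableEq ι] in
@[simp] lemma pauliString_apply (x z σ τ : ι → Fin 2) :
    pauliString x z σ τ = if τ = σ + x then parity (z ⬝ᵥ σ) else 0 := rfl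

omit [DecidableEq ι] in
@[simp] lemma pauliString_zero_zero : pauliString (0 : ι → Fin 2) 0 = 1 := by
  ext σ τ
  simp [Matrix.one_apply, eq_comm]

lemma pauliString_mul_pauliString (x z x' z' : ι → Fin 2) :
    pauliString x z * pauliString x' z' =
      parity (z' ⬝ᵥ x) • pauliString (x + x') (z + z') := by
  ext σ τ
  simp only [Matrix.mul_apply, pauliString_apply, Matrix.smul_apply, smul_eq_mul, ite_mul,
    zero_mul, Finset.sum_ite_eq', Finset.mem_univ, if_true, ← add_assoc]
  split_ifs
  · simp only [dotProduct_add, add_dotProduct, parity_add]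
    ring
  · simp

omit [DecidableEq ι] in
lemma conjTranspose_pauliString (x z : ι → Fin 2) :
    (pauliString x z)ᴴ = parity (z ⬝ᵥ x) • pauliString x z := by
  ext σ τ
  have hswap : σ = τ + x ↔ τ = σ + x := by
    constructor <;> rintro rfl <;> simp [add_assoc, Pi.add_self_fin_two]
  simp only [conjTranspose_apply, pauliString_apply, Matrix.smul_apply, smul_eq_mul, hswap]
  split_ifs with h
  · subst h
    simp [dotProduct_add, parity_add, mul_comm]
  · simp

lemma conjTranspose_pauliString_mul_self (x z : ι → Fin 2) :
    (pauliString x z)ᴴ * pauliString x z = 1 := by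
  rw [conjTranspose_pauliString, smul_mul_assoc, pauliString_mul_pauliString, smul_smul,
    parity_mul_self, one_smul, Pi.add_self_fin_two, Pi.add_self_fin_two, pauliString_zero_zero]

lemma pauliString_mul_self_of_dotProduct_eq_zero {x z : ι → Fin 2} (h : z ⬝ᵥ x = 0) :
    pauliString x z * pauliString x z = 1 := by
  rw [pauliString_mul_pauliString, h, parity_zero, one_smul, Pi.add_self_fin_two,
    Pi.add_self_fin_two, pauliString_zero_zero]

lemma commute_pauliString {x z x' z' : ι → Fin 2} (h : z' ⬝ᵥ x = z ⬝ᵥ x') :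
    Commute (pauliString x z) (pauliString x' z') := by
  rw [Commute, SemiconjBy, pauliString_mul_pauliString, pauliString_mul_pauliString, h,
    add_comm x, add_comm z]

lemma trace_pauliString_mul (x z : ι → Fin 2) (ρ : Matrix (ι → Fin 2) (ι → Fin 2) ℂ) :
    (pauliString x z * ρ).trace = ∑ σ, parity (z ⬝ᵥ σ) * ρ (σ + x) σ := by
  simp [Matrix.trace, Matrix.mul_apply, ite_mul]

lemma list_prod_pauliString_X {κ : Type*} (x : κ → ι → Fin 2) (l : List κ) :
    (l.map fun k => pauliString (x k) 0).prod = pauliString (l.map x).sum 0 := by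
  induction l with
  | nil => simp
  | cons k l ih => simp [ih, pauliString_mul_pauliString]

lemma list_prod_pauliString_Z {κ : Type*} (z : κ → ι → Fin 2) (l : List κ) :
    (l.map fun k => pauliString 0 (z k)).prod = pauliString 0 (l.map z).sum := by
  induction l with
  | nil => simp
  | cons k l ih => simp [ih, pauliString_mul_pauliString]

end PauliString

lemma ContinuousLinearMap.apply_exp_apply_of_comp_eq_zero {𝕜 F G : Type*} [RCLike 𝕜]
    [NormedAddCommGroup F] [NormedSpace 𝕜 F] [CompleteSpace F]
    [NormedAddCommGroup G] [NormedSpace 𝕜 G] {A : F →L[𝕜] F} {φ : F →L[𝕜] G}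
    (h : φ ∘L A = 0) (x : F) : φ (NormedSpace.exp A x) = φ x := by
  have hseries := ((NormedSpace.exp_series_hasSum_exp' (𝕂 := 𝕜) A).mapL
    (ContinuousLinearMap.apply 𝕜 F x)).mapL φ
  refine hseries.unique ?_
  convert hasSum_ite_eq 0 (φ x) using 1
  funext n
  cases n with
  | zero => simp
  | succ n =>
    have hAn : φ ((A ^ (n + 1)) x) = 0 := by
      rw [pow_succ']
      exact DFunLike.congr_fun h _
    rw [ContinuousLinearMap.apply_apply, _root_.smul_apply, map_smul, hAn, smul_zero,
      if_neg n.succ_ne_zero]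

lemma IsIdempotentElem.half_one_add {A : Type*} [Ring A] [Algebra ℂ A] {S : A}
    (hS : S * S = 1) : IsIdempotentElem ((2⁻¹ : ℂ) • (1 + S)) := by
  rw [IsIdempotentElem, smul_mul_smul_comm, mul_add, add_mul, add_mul, one_mul, one_mul, mul_one,
    hS]
  module

lemma Matrix.trace_mul_channel {n R : Type*} [Fintype n] [DecidableEq n] [CommRing R] [Star R]
    {M P Q C : Matrix n n R} (hP : IsIdempotentElem P) (hQ : IsIdempotentElem Q)
    (hPQ : P + Q = 1) (hC : Cᴴ * C = 1) (hMP : Commute M P) (hMC : Commute M C)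
    (ρ : Matrix n n R) :
    (M * (P * (ρ * P) + C * Q * (ρ * (Q * Cᴴ)))).trace = (M * ρ).trace := by
  have hMQ : Commute M Q := by
    rw [eq_sub_of_add_eq' hPQ]
    exact (Commute.one_right M).sub_right hMP
  have hCMC : Cᴴ * M * C = M := by
    rw [Matrix.mul_assoc, hMC.eq, ← Matrix.mul_assoc, hC, Matrix.one_mul]
  have cycle (A B : Matrix n n R) : (M * (A * (ρ * B))).trace = (B * M * A * ρ).trace := by
    simpa only [Matrix.mul_assoc] using Matrix.trace_mul_comm (M * (A * ρ)) B
  calc (M * (P * (ρ * P) + C * Q * (ρ * (Q * Cᴴ)))).trace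
      = (P * M * P * ρ).trace + (Q * (Cᴴ * M * C) * Q * ρ).trace := by
        rw [Matrix.mul_add, Matrix.trace_add, cycle, cycle]
        simp only [Matrix.mul_assoc]
    _ = (M * (P + Q) * ρ).trace := by
        rw [hCMC, ← hMP.eq, ← hMQ.eq, Matrix.mul_assoc M P P, hP.eq, Matrix.mul_assoc M Q Q,
          hQ.eq, Matrix.mul_add, Matrix.add_mul, Matrix.trace_add]
    _ = (M * ρ).trace := by rw [hPQ, Matrix.mul_one]

namespace Toric

variable {L : ℕ} [NeZero L]

lemma Xop_eq_pauliString (e : E L) : Xop L e = pauliString (Pi.single e 1) 0 := by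
  ext σ τ
  simp only [Xop, pauliString_apply, zero_dotProduct, parity_zero, funext_iff, Pi.add_apply,
    Pi.single_apply]
  congr 1
  refine propext ⟨fun ⟨he, hne⟩ e' => ?_, fun h => ⟨?_, fun e' he' => ?_⟩⟩
  · by_cases h : e' = e
    · simp [h, he, add_comm]
    · simp [hne e' h, h]
  · simp [h, add_comm]
  · simp [h, he']

lemma Zop_eq_pauliString (e : E L) : Zop L e = pauliString 0 (Pi.single e 1) := by
  ext σ τ
  simp [Zop, Matrix.diagonal_apply, parity, eq_comm]

def vertexSupport (v : V L) : E L → Fin 2 :=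
  Pi.single (v, 0) 1 + Pi.single (v, 1) 1 + Pi.single (v - (1, 0), 0) 1 +
    Pi.single (v - (0, 1), 1) 1

def plaquetteSupport (v : V L) : E L → Fin 2 :=
  Pi.single (v, 0) 1 + Pi.single (v, 1) 1 + Pi.single (v + (1, 0), 1) 1 +
    Pi.single (v + (0, 1), 0) 1

lemma Sv_eq_pauliString (v : V L) : Sv L v = pauliString (vertexSupport v) 0 := by
  simp only [Sv, Xop_eq_pauliString, pauliString_mul_pauliString, zero_dotProduct, parity_zero,
    one_smul, add_zero]
  rfl

lemma Sp_eq_pauliString (v : V L) : Sp L v = pauliString 0 (plaquetteSupport v) := by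
  simp only [Sp, Zop_eq_pauliString, pauliString_mul_pauliString, dotProduct_zero, parity_zero,
    one_smul, add_zero]
  rfl

lemma stab_mul_self (j : Gen L) : stab L j * stab L j = 1 := by
  cases j with
  | inl v =>
    rw [stab, Sv_eq_pauliString]
    exact pauliString_mul_self_of_dotProduct_eq_zero (zero_dotProduct _)
  | inr v =>
    rw [stab, Sp_eq_pauliString]
    exact pauliString_mul_self_of_dotProduct_eq_zero (dotProduct_zero _)

lemma commute_pauliString_stab {x z : E L → Fin 2} (hx : ∀ v, plaquetteSupport v ⬝ᵥ x = 0)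
    (hz : ∀ v, z ⬝ᵥ vertexSupport v = 0) (j : Gen L) :
    Commute (pauliString x z) (stab L j) := by
  cases j with
  | inl v =>
    rw [stab, Sv_eq_pauliString]
    exact commute_pauliString (by rw [zero_dotProduct, hz v])
  | inr v =>
    rw [stab, Sp_eq_pauliString]
    exact commute_pauliString (by rw [dotProduct_zero, hx v])

lemma conjTranspose_corr_mul_self (j : Gen L) : (corr L j)ᴴ * corr L j = 1 := by
  rcases j with ⟨r, s⟩ | ⟨r, s⟩ <;> simp only [corr] <;> split_ifs <;>
    simp only [conjTranspose_one, mul_one, Xop_eq_pauliString, Zop_eq_pauliString,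
      conjTranspose_pauliString_mul_self]

lemma commute_pauliString_corr {x z : E L → Fin 2}
    (hx₁ : ∀ r s : ZMod L, s ≠ 1 → x ((r, s - 1), 1) = 0)
    (hx₂ : ∀ r : ZMod L, r ≠ 1 → x ((r - 1, 1), 0) = 0)
    (hz₁ : ∀ r s : ZMod L, s ≠ 0 → z ((r, s + 1), 0) = 0)
    (hz₂ : ∀ r : ZMod L, r ≠ 0 → z ((r + 1, 0), 1) = 0) (j : Gen L) :
    Commute (pauliString x z) (corr L j) := by
  rcases j with ⟨r, s⟩ | ⟨r, s⟩ <;> simp only [corr]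
  · split_ifs with hv hs
    · exact Commute.one_right _
    · rw [Zop_eq_pauliString]
      exact commute_pauliString (by rw [single_dotProduct, hx₁ r s hs, dotProduct_zero, mul_zero])
    · have hr : r ≠ 1 := by rintro rfl; simp_all
      rw [Zop_eq_pauliString]
      exact commute_pauliString (by rw [single_dotProduct, hx₂ r hr, dotProduct_zero, mul_zero])
  · split_ifs with hp hs
    · exact Commute.one_right _
    · rw [Xop_eq_pauliString]
      exact commute_pauliString (by rw [zero_dotProduct, dotProduct_single, hz₁ r s hs, zero_mul])
    · have hr : r ≠ 0 := by rintro rfl; simp_all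
      rw [Xop_eq_pauliString]
      exact commute_pauliString (by rw [zero_dotProduct, dotProduct_single, hz₂ r hr, zero_mul])

lemma listProd_Xop {κ : Type*} [Fintype κ] {g : κ → E L} (hg : Function.Injective g) :
    listProd L (fun k => Xop L (g k)) =
      pauliString (fun e => if ∃ k, g k = e then 1 else 0) 0 := by
  simp only [listProd, Xop_eq_pauliString, list_prod_pauliString_X, Finset.sum_map_toList]
  rw [sum_pi_single_one_of_injective hg]

lemma listProd_Zop {κ : Type*} [Fintype κ] {g : κ → E L} (hg : Function.Injective g) :
    listProd L (fun k => Zop L (g k)) =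
      pauliString 0 (fun e => if ∃ k, g k = e then 1 else 0) := by
  simp only [listProd, Zop_eq_pauliString, list_prod_pauliString_Z, Finset.sum_map_toList]
  rw [sum_pi_single_one_of_injective hg]

def stringX1 : E L → Fin 2 := fun e => if e.1.1 = 0 ∧ e.2 = 0 then 1 else 0
def stringZ1 : E L → Fin 2 := fun e => if e.1.2 = 1 ∧ e.2 = 0 then 1 else 0
def stringX2 : E L → Fin 2 := fun e => if e.1.2 = 0 ∧ e.2 = 1 then 1 else 0
def stringZ2 : E L → Fin 2 := fun e => if e.1.1 = 1 ∧ e.2 = 1 then 1 else 0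

lemma X1bar_eq_pauliString : X1bar L = pauliString stringX1 0 := by
  rw [X1bar, listProd_Xop (fun s t h => by simpa using h)]
  congr 1
  funext ⟨⟨r, s⟩, i⟩
  simp [stringX1, eq_comm]

lemma Z1bar_eq_pauliString : Z1bar L = pauliString 0 stringZ1 := by
  rw [Z1bar, listProd_Zop (fun s t h => by simpa using h)]
  congr 1
  funext ⟨⟨r, s⟩, i⟩
  simp [stringZ1, eq_comm]

lemma X2bar_eq_pauliString : X2bar L = pauliString stringX2 0 := by
  rw [X2bar, listProd_Xop (fun s t h => by simpa using h)]
  congr 1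
  funext ⟨⟨r, s⟩, i⟩
  simp [stringX2, eq_comm]

lemma Z2bar_eq_pauliString : Z2bar L = pauliString 0 stringZ2 := by
  rw [Z2bar, listProd_Zop (fun s t h => by simpa using h)]
  congr 1
  funext ⟨⟨r, s⟩, i⟩
  simp [stringZ2, eq_comm]

lemma stringZ1_dotProduct_stringX1 : stringZ1 ⬝ᵥ stringX1 (L := L) = 1 := by
  rw [dotProduct, Fintype.sum_eq_single (A1 L)]
  · simp [stringZ1, stringX1, A1]
  · rintro ⟨⟨r, s⟩, i⟩ h
    simp only [stringZ1, stringX1, A1, ne_eq, Prod.mk.injEq] at h ⊢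
    split_ifs <;> simp_all

lemma stringZ2_dotProduct_stringX2 : stringZ2 ⬝ᵥ stringX2 (L := L) = 1 := by
  rw [dotProduct, Fintype.sum_eq_single (A2 L)]
  · simp [stringZ2, stringX2, A2]
  · rintro ⟨⟨r, s⟩, i⟩ h
    simp only [stringZ2, stringX2, A2, ne_eq, Prod.mk.injEq] at h ⊢
    split_ifs <;> simp_all

lemma stringZ2_dotProduct_stringX1 : stringZ2 ⬝ᵥ stringX1 (L := L) = 0 :=
  Finset.sum_eq_zero fun e _ => by simp only [stringZ2, stringX1]; split_ifs <;> simp_all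

lemma plaquetteSupport_dotProduct_stringX1 (v : V L) : plaquetteSupport v ⬝ᵥ stringX1 = 0 := by
  simp [plaquetteSupport, add_dotProduct, stringX1]

lemma plaquetteSupport_dotProduct_stringX2 (v : V L) : plaquetteSupport v ⬝ᵥ stringX2 = 0 := by
  simp [plaquetteSupport, add_dotProduct, stringX2]

lemma stringZ1_dotProduct_vertexSupport (v : V L) : stringZ1 ⬝ᵥ vertexSupport v = 0 := by
  simp [vertexSupport, dotProduct_add, stringZ1]

lemma stringZ2_dotProduct_vertexSupport (v : V L) : stringZ2 ⬝ᵥ vertexSupport v = 0 := by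
  simp [vertexSupport, dotProduct_add, stringZ2]

-- `pauli a = phase a • Z^(zBit a) X^(xBit a)`, see `pauli_apply`.
def xBit : Fin 4 → Fin 2 := ![0, 1, 1, 0]

def zBit : Fin 4 → Fin 2 := ![0, 0, 1, 1]

noncomputable def phase : Fin 4 → ℂ := ![1, 1, -Complex.I, 1]

lemma logical1_eq_pauliString (a : Fin 4) :
    logical1 L a = phase a • pauliString (xBit a • stringX1) (zBit a • stringZ1) := by
  fin_cases a <;>
    simp [logical1, phase, xBit, zBit, X1bar_eq_pauliString, Z1bar_eq_pauliString,
      pauliString_mul_pauliString, stringZ1_dotProduct_stringX1]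

lemma logical2_eq_pauliString (b : Fin 4) :
    logical2 L b = phase b • pauliString (xBit b • stringX2) (zBit b • stringZ2) := by
  fin_cases b <;>
    simp [logical2, phase, xBit, zBit, X2bar_eq_pauliString, Z2bar_eq_pauliString,
      pauliString_mul_pauliString, stringZ2_dotProduct_stringX2]

def logicalPX (a b : Fin 4) : E L → Fin 2 := xBit a • stringX1 + xBit b • stringX2

def logicalPZ (a b : Fin 4) : E L → Fin 2 := zBit a • stringZ1 + zBit b • stringZ2

lemma logicalP_eq_pauliString (a b : Fin 4) :
    logicalP L a b = (phase a * phase b) • pauliString (logicalPX a b) (logicalPZ a b) := by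
  rw [logicalP, logical1_eq_pauliString, logical2_eq_pauliString, smul_mul_smul_comm,
    pauliString_mul_pauliString, smul_dotProduct, dotProduct_smul, stringZ2_dotProduct_stringX1]
  simp [logicalPX, logicalPZ]

lemma commute_logicalP_stab (a b : Fin 4) (j : Gen L) :
    Commute (logicalP L a b) (stab L j) := by
  rw [logicalP_eq_pauliString]
  refine (commute_pauliString_stab (fun v => ?_) (fun v => ?_) j).smul_left _
  · simp [logicalPX, dotProduct_add, plaquetteSupport_dotProduct_stringX1,
      plaquetteSupport_dotProduct_stringX2]
  · simp [logicalPZ, add_dotProduct, stringZ1_dotProduct_vertexSupport,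
      stringZ2_dotProduct_vertexSupport]

lemma commute_logicalP_corr (a b : Fin 4) (j : Gen L) :
    Commute (logicalP L a b) (corr L j) := by
  rw [logicalP_eq_pauliString]
  refine (commute_pauliString_corr ?_ ?_ ?_ ?_ j).smul_left _ <;> intro r
  · intro s hs; simp [logicalPX, stringX1, stringX2, sub_eq_zero, hs]
  · intro hr; simp [logicalPX, stringX1, stringX2, sub_eq_zero, hr]
  · intro s hs; simp [logicalPZ, stringZ1, stringZ2, hs]
  · intro hr; simp [logicalPZ, stringZ1, stringZ2, hr]

lemma isIdempotentElem_Pplus (j : Gen L) : IsIdempotentElem (Pplus L j) :=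
  .half_one_add (stab_mul_self j)

lemma isIdempotentElem_Pminus (j : Gen L) : IsIdempotentElem (Pminus L j) := by
  rw [Pminus, sub_eq_add_neg]
  exact .half_one_add (by rw [neg_mul_neg, stab_mul_self])

lemma Pplus_add_Pminus (j : Gen L) : Pplus L j + Pminus L j = 1 := by
  rw [Pplus, Pminus, ← smul_add, add_add_sub_cancel, ← two_smul ℂ, smul_smul]
  norm_num

lemma trace_mul_Tj {M : Op L} {j : Gen L} (hS : Commute M (stab L j))
    (hC : Commute M (corr L j)) (ρ : Op L) : (M * Tj L j ρ).trace = (M * ρ).trace :=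
  Matrix.trace_mul_channel (isIdempotentElem_Pplus j) (isIdempotentElem_Pminus j)
    (Pplus_add_Pminus j) (conjTranspose_corr_mul_self j)
    (((Commute.one_right M).add_right hS).smul_right _) hC ρ

lemma trace_mul_Liou {M : Op L} (hS : ∀ j, Commute M (stab L j))
    (hC : ∀ j, Commute M (corr L j)) (ρ : Op L) : (M * Liou L ρ).trace = 0 := by
  rw [Liou, LinearMap.sum_apply, Matrix.mul_sum, Matrix.trace_sum]
  refine Finset.sum_eq_zero fun j _ => ?_
  rw [LinearMap.sub_apply, LinearMap.id_apply, Matrix.mul_sub, Matrix.trace_sub,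
    trace_mul_Tj (hS j) (hC j), sub_self]

lemma trace_mul_expL {M : Op L} (hS : ∀ j, Commute M (stab L j))
    (hC : ∀ j, Commute M (corr L j)) (t : ℝ) (ρ : Op L) :
    (M * expL L t ρ).trace = (M * ρ).trace := by
  let φ : Op L →L[ℂ] ℂ :=
    ((Matrix.traceLinearMap _ ℂ ℂ).comp (LinearMap.mulLeft ℂ M)).toContinuousLinearMap
  refine ContinuousLinearMap.apply_exp_apply_of_comp_eq_zero (φ := φ) ?_ ρ
  ext σ
  change (M * ((t : ℂ) • Liou L σ)).trace = 0
  rw [Matrix.mul_smul, Matrix.trace_smul, trace_mul_Liou hS hC, smul_zero]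

lemma mem_Bfin {e : E L} : e ∈ Bfin L ↔ e.1.1 = 0 ∧ e.2 = 0 ∧ e.1.2 ≠ 1 := by
  obtain ⟨⟨r, s⟩, i⟩ := e
  simp only [Bfin, Finset.mem_image, Finset.mem_filter, Finset.mem_univ, true_and, Prod.mk.injEq]
  aesop

lemma mem_B'fin {e : E L} : e ∈ B'fin L ↔ e.1.2 = 0 ∧ e.2 = 1 ∧ e.1.1 ≠ 1 := by
  obtain ⟨⟨r, s⟩, i⟩ := e
  simp only [B'fin, Finset.mem_image, Finset.mem_filter, Finset.mem_univ, true_and,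
    Prod.mk.injEq]
  aesop

lemma mem_Cfin {e : E L} : e ∈ Cfin L ↔ e.1.2 = 1 ∧ e.2 = 0 ∧ e.1.1 ≠ 0 := by
  obtain ⟨⟨r, s⟩, i⟩ := e
  simp only [Cfin, Finset.mem_image, Finset.mem_filter, Finset.mem_univ, true_and, Prod.mk.injEq]
  aesop

lemma mem_C'fin {e : E L} : e ∈ C'fin L ↔ e.1.1 = 1 ∧ e.2 = 1 ∧ e.1.2 ≠ 0 := by
  obtain ⟨⟨r, s⟩, i⟩ := e
  simp only [C'fin, Finset.mem_image, Finset.mem_filter, Finset.mem_univ, true_and,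
    Prod.mk.injEq]
  aesop

lemma mem_Dfin {e : E L} :
    e ∈ Dfin L ↔
      e ≠ A1 L ∧ e ≠ A2 L ∧ e ∉ Bfin L ∪ B'fin L ∧ e ∉ Cfin L ∪ C'fin L := by
  simp only [Dfin, Finset.mem_sdiff, Finset.mem_univ, true_and, Finset.mem_union,
    Finset.mem_insert, Finset.mem_singleton]
  tauto

omit [NeZero L] in
lemma A2_ne_A1 : A2 L ≠ A1 L := by simp [A1, A2]

lemma A1_notMem_BB' : A1 L ∉ Bfin L ∪ B'fin L := by simp [mem_Bfin, mem_B'fin, A1]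

lemma A2_notMem_BB' : A2 L ∉ Bfin L ∪ B'fin L := by simp [mem_Bfin, mem_B'fin, A2]

lemma A1_notMem_CC' : A1 L ∉ Cfin L ∪ C'fin L := by simp [mem_Cfin, mem_C'fin, A1]

lemma A2_notMem_CC' : A2 L ∉ Cfin L ∪ C'fin L := by simp [mem_Cfin, mem_C'fin, A2]

lemma disjoint_BB'_CC' : Disjoint (Bfin L ∪ B'fin L) (Cfin L ∪ C'fin L) := by
  simp only [Finset.disjoint_left, Finset.mem_union, mem_Bfin, mem_B'fin, mem_Cfin, mem_C'fin]
  grind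

def configSplit : (E L → Fin 2) ≃
    (Fin 2 × Fin 2) × ((Bfin L ∪ B'fin L : Finset (E L)) → Fin 2) ×
      ((Cfin L ∪ C'fin L : Finset (E L)) → Fin 2) × (Dfin L → Fin 2) where
  toFun σ := ((σ (A1 L), σ (A2 L)), fun e => σ e, fun e => σ e, fun e => σ e)
  -- the final `0` is never reached: the five regions cover `E L`
  invFun q e :=
    if e = A1 L then q.1.1 else if e = A2 L then q.1.2
    else if hB : e ∈ Bfin L ∪ B'fin L then q.2.1 ⟨e, hB⟩
    else if hC : e ∈ Cfin L ∪ C'fin L then q.2.2.1 ⟨e, hC⟩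
    else if hD : e ∈ Dfin L then q.2.2.2 ⟨e, hD⟩ else 0
  left_inv σ := by
    funext e
    have := mem_Dfin (e := e)
    dsimp only
    split_ifs <;> simp_all
  right_inv := by
    rintro ⟨⟨u, v⟩, fB, fC, fD⟩
    have hB (e : E L) (he : e ∈ Bfin L ∪ B'fin L) : e ≠ A1 L ∧ e ≠ A2 L :=
      ⟨by rintro rfl; exact A1_notMem_BB' he, by rintro rfl; exact A2_notMem_BB' he⟩
    have hC (e : E L) (he : e ∈ Cfin L ∪ C'fin L) :
        e ≠ A1 L ∧ e ≠ A2 L ∧ e ∉ Bfin L ∪ B'fin L :=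
      ⟨by rintro rfl; exact A1_notMem_CC' he, by rintro rfl; exact A2_notMem_CC' he,
        Finset.disjoint_right.mp disjoint_BB'_CC' he⟩
    simp only [Prod.mk.injEq]
    refine ⟨⟨by simp, by simp [A2_ne_A1]⟩, ?_, ?_, ?_⟩ <;> funext ⟨e, he⟩
    · simp [hB e he, he]
    · simp [hC e he, he]
    · obtain ⟨h1, h2, h3, h4⟩ := mem_Dfin.mp he
      simp [h1, h2, h3, h4, he]

section InitialState

variable (ρD : Matrix ({e // e ∈ Dfin L} → Fin 2) ({e // e ∈ Dfin L} → Fin 2) ℂ)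

noncomputable def environmentDiag (σ : E L → Fin 2) : ℂ :=
  (∏ _e ∈ Bfin L ∪ B'fin L, (2⁻¹ : ℂ)) *
    ((if (fun e : {e // e ∈ Cfin L ∪ C'fin L} => σ e) = 0 then 1 else 0) *
      ρD (fun d => σ d) (fun d => σ d))

lemma rho0_add_apply_self (Ψ : Fin 2 → Fin 2 → ℂ) {x : E L → Fin 2}
    (hxC : ∀ e ∈ Cfin L ∪ C'fin L, x e = 0) (hxD : ∀ e ∈ Dfin L, x e = 0)
    (σ : E L → Fin 2) :
    rho0 L Ψ ρD (σ + x) σ =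
      Ψ (σ (A1 L) + x (A1 L)) (σ (A2 L) + x (A2 L)) * starRingEnd ℂ (Ψ (σ (A1 L)) (σ (A2 L))) *
        environmentDiag ρD σ := by
  have hD : (fun d : {e // e ∈ Dfin L} => σ d.1 + x d.1) = fun d => σ d.1 :=
    funext fun d => by rw [hxD d.1 d.2, add_zero]
  have hC : (∏ e ∈ Cfin L ∪ C'fin L, if σ e + x e = 0 ∧ σ e = 0 then (1 : ℂ) else 0) =
      if (fun e : {e // e ∈ Cfin L ∪ C'fin L} => σ e) = 0 then 1 else 0 := by
    simp only [Finset.prod_ite_zero, Finset.prod_const_one, funext_iff, Pi.zero_apply,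
      Subtype.forall]
    congr 1
    exact propext (forall₂_congr fun e he => by rw [hxC e he, add_zero, and_self])
  simp only [rho0, environmentDiag, Pi.add_apply]
  rw [hD, hC]
  ring

variable {ρD}

lemma sum_mul_environmentDiag (hρD : ρD.trace = 1) (g : Fin 2 → Fin 2 → ℂ) :
    ∑ σ : E L → Fin 2, g (σ (A1 L)) (σ (A2 L)) * environmentDiag ρD σ = ∑ u, ∑ v, g u v := by
  refine (Fintype.sum_equiv configSplit _ (fun q => g q.1.1 q.1.2 *
    ((∏ _e ∈ Bfin L ∪ B'fin L, (2⁻¹ : ℂ)) * ((if q.2.2.1 = 0 then 1 else 0) * ρD q.2.2.2 q.2.2.2)))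
    fun σ => rfl).trans ?_
  have hB : (∏ _e ∈ Bfin L ∪ B'fin L, (2⁻¹ : ℂ)) *
      ∑ _fB : (Bfin L ∪ B'fin L : Finset (E L)) → Fin 2, 1 = 1 := by
    rw [Finset.sum_const, Finset.prod_const, Finset.card_univ, Fintype.card_fun, Fintype.card_coe,
      Fintype.card_fin, nsmul_one, Nat.cast_pow, Nat.cast_ofNat, ← mul_pow,
      inv_mul_cancel₀ two_ne_zero, one_pow]
  have hCD : ∑ fC : (Cfin L ∪ C'fin L : Finset (E L)) → Fin 2, ∑ fD : Dfin L → Fin 2,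
      (if fC = 0 then 1 else 0) * ρD fD fD = 1 := by
    simp only [← Finset.mul_sum]
    simp only [ite_mul, one_mul, zero_mul, Finset.sum_ite_eq', Finset.mem_univ, if_true]
    exact hρD
  simp only [Fintype.sum_prod_type, ← Finset.mul_sum, hCD, mul_one, hB]

lemma dotProduct_eq_of_eq_zero_on_CC' {z σ : E L → Fin 2}
    (hz : ∀ e, z e ≠ 0 → e = A1 L ∨ e = A2 L ∨ e ∈ Cfin L ∪ C'fin L)
    (hσ : ∀ e ∈ Cfin L ∪ C'fin L, σ e = 0) :
    z ⬝ᵥ σ = z (A1 L) * σ (A1 L) + z (A2 L) * σ (A2 L) := by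
  refine Fintype.sum_eq_add _ _ A2_ne_A1.symm fun e ⟨h1, h2⟩ => ?_
  by_cases h : z e = 0
  · rw [h, zero_mul]
  · rcases hz e h with rfl | rfl | hC
    exacts [absurd rfl h1, absurd rfl h2, by rw [hσ e hC, mul_zero]]

lemma trace_pauliString_mul_rho0 (Ψ : Fin 2 → Fin 2 → ℂ) (hρD : ρD.trace = 1)
    {x z : E L → Fin 2}
    (hx : ∀ e, x e ≠ 0 → e = A1 L ∨ e = A2 L ∨ e ∈ Bfin L ∪ B'fin L)
    (hz : ∀ e, z e ≠ 0 → e = A1 L ∨ e = A2 L ∨ e ∈ Cfin L ∪ C'fin L) :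
    (pauliString x z * rho0 L Ψ ρD).trace =
      ∑ u : Fin 2, ∑ v : Fin 2, parity (z (A1 L) * u) * parity (z (A2 L) * v) *
        (Ψ (u + x (A1 L)) (v + x (A2 L)) * starRingEnd ℂ (Ψ u v)) := by
  have hxC (e : E L) (he : e ∈ Cfin L ∪ C'fin L) : x e = 0 := by
    by_contra h
    rcases hx e h with rfl | rfl | hB
    exacts [A1_notMem_CC' he, A2_notMem_CC' he, Finset.disjoint_left.mp disjoint_BB'_CC' hB he]
  have hxD (e : E L) (he : e ∈ Dfin L) : x e = 0 := by
    by_contra h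
    have := mem_Dfin.mp he
    rcases hx e h with rfl | rfl | hB <;> simp_all
  rw [trace_pauliString_mul, ← sum_mul_environmentDiag hρD]
  refine Finset.sum_congr rfl fun σ _ => ?_
  rw [rho0_add_apply_self ρD Ψ hxC hxD, environmentDiag]
  split_ifs with hσ
  · rw [dotProduct_eq_of_eq_zero_on_CC' hz fun e he => congr_fun hσ ⟨e, he⟩, parity_add]
    ring
  · simp only [zero_mul, mul_zero]

end InitialState

lemma pauli_apply (a : Fin 4) (u u' : Fin 2) :
    pauli a u u' = phase a * if u' = u + xBit a then parity (zBit a * u) else 0 := by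
  fin_cases a <;> fin_cases u <;> fin_cases u' <;> simp [pauli, phase, xBit, zBit]

lemma expval_eq (Ψ : Fin 2 → Fin 2 → ℂ) (a b : Fin 4) :
    expval Ψ a b = phase a * phase b * ∑ u : Fin 2, ∑ v : Fin 2,
      parity (zBit a * u) * parity (zBit b * v) *
        (Ψ (u + xBit a) (v + xBit b) * starRingEnd ℂ (Ψ u v)) := by
  simp only [expval, pauli_apply, mul_ite, ite_mul, mul_zero, zero_mul, Finset.sum_ite_irrel,
    Finset.sum_const_zero, Finset.sum_ite_eq', Finset.mem_univ, if_true, Finset.mul_sum]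
  exact Finset.sum_congr rfl fun u _ => Finset.sum_congr rfl fun v _ => by ring

lemma eq_A1_or_A2_or_mem_BB'_of_logicalPX_ne_zero (a b : Fin 4) {e : E L}
    (he : logicalPX a b e ≠ 0) : e = A1 L ∨ e = A2 L ∨ e ∈ Bfin L ∪ B'fin L := by
  obtain ⟨⟨r, s⟩, i⟩ := e
  simp only [logicalPX, Pi.add_apply, Pi.smul_apply, stringX1, stringX2, smul_eq_mul, mul_ite,
    mul_one, mul_zero] at he
  simp only [A1, A2, Finset.mem_union, mem_Bfin, mem_B'fin, Prod.mk.injEq]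
  split_ifs at he <;> simp_all <;> tauto

lemma eq_A1_or_A2_or_mem_CC'_of_logicalPZ_ne_zero (a b : Fin 4) {e : E L}
    (he : logicalPZ a b e ≠ 0) : e = A1 L ∨ e = A2 L ∨ e ∈ Cfin L ∪ C'fin L := by
  obtain ⟨⟨r, s⟩, i⟩ := e
  simp only [logicalPZ, Pi.add_apply, Pi.smul_apply, stringZ1, stringZ2, smul_eq_mul, mul_ite,
    mul_one, mul_zero] at he
  simp only [A1, A2, Finset.mem_union, mem_Cfin, mem_C'fin, Prod.mk.injEq]
  split_ifs at he <;> simp_all <;> tauto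

end Toric

open Toric in
theorem toric_code_preservation_of_logical_information_general
    (L : ℕ) [NeZero L]
    (Ψ : Fin 2 → Fin 2 → ℂ)
    (ρD : Matrix ({e // e ∈ Dfin L} → Fin 2) ({e // e ∈ Dfin L} → Fin 2) ℂ)
    (hρDtr : ρD.trace = 1)
    (a b : Fin 4) (t : ℝ) :
    (logicalP L a b * expL L t (rho0 L Ψ ρD)).trace = expval Ψ a b := by
  rw [trace_mul_expL (commute_logicalP_stab a b) (commute_logicalP_corr a b),
    logicalP_eq_pauliString, Matrix.smul_mul, Matrix.trace_smul,
    trace_pauliString_mul_rho0 Ψ hρDtr (fun _ => eq_A1_or_A2_or_mem_BB'_of_logicalPX_ne_zero a b)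
      (fun _ => eq_A1_or_A2_or_mem_CC'_of_logicalPZ_ne_zero a b), expval_eq, smul_eq_mul]
  simp [logicalPX, logicalPZ, stringX1, stringX2, stringZ1, stringZ2, A1, A2]

open Toric in
/-- Preservation of logical information: for every two-qubit Pauli
`P = P₁ ⊗ P₂` with logical counterpart `P̄ = P̄₁P̄₂`, every two-qubit state `|Ψ⟩`,
every density matrix `ρ_D` and every `t ≥ 0`,
`tr(P̄ e^{tL}(ρ₀)) = ⟨Ψ|P|Ψ⟩`. -/
theorem toric_code_preservation_of_logical_information
    (L : ℕ) [NeZero L] (hL : 2 ≤ L)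
    (Ψ : Fin 2 → Fin 2 → ℂ) (hΨ : ∑ x : Fin 2, ∑ y : Fin 2, Complex.normSq (Ψ x y) = 1)
    (ρD : Matrix ({e // e ∈ Dfin L} → Fin 2) ({e // e ∈ Dfin L} → Fin 2) ℂ)
    (hρD : ρD.PosSemidef) (hρDtr : ρD.trace = 1)
    (a b : Fin 4) (t : ℝ) (ht : 0 ≤ t) :
    (logicalP L a b * expL L t (rho0 L Ψ ρD)).trace = expval Ψ a b :=
  toric_code_preservation_of_logical_information_general L Ψ ρD hρDtr a b t
end

section
/- Energy lowering: for every positive semidefinite n×n complex matrix ρ, tr(T(ρ) P⁻) ≤ tr(ρ P⁻). -/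
open scoped Matrix ComplexOrder

/-!
Because `C` anticommutes with `S`, conjugating by `C` swaps the eigenspaces of `S`:
`Cᴴ P⁻ = P⁺ Cᴴ`. Hence both summands of `T(ρ)` are annihilated on the right by `P⁻`, so
`tr(T(ρ) P⁻) = 0`, while `tr(ρ P⁻) = tr(P⁻ ρ P⁻) ≥ 0` since `P⁻` is an orthogonal projection.
-/

section Involution

variable {A : Type*} [Ring A] [Algebra ℂ A] {S : A}

theorem half_one_add_mul_half_one_sub (hS2 : S * S = 1) :
    ((2⁻¹ : ℂ) • (1 + S)) * ((2⁻¹ : ℂ) • (1 - S)) = 0 := by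
  have : (1 + S) * (1 - S) = 0 := by
    simp only [mul_sub, add_mul, mul_one, one_mul, hS2]; abel
  rw [smul_mul_smul_comm, this, smul_zero]

theorem half_one_sub_mul_half_one_add (hS2 : S * S = 1) :
    ((2⁻¹ : ℂ) • (1 - S)) * ((2⁻¹ : ℂ) • (1 + S)) = 0 := by
  have : (1 - S) * (1 + S) = 0 := by
    simp only [mul_add, sub_mul, mul_one, one_mul, hS2]; abel
  rw [smul_mul_smul_comm, this, smul_zero]

theorem isIdempotentElem_half_one_sub (hS2 : S * S = 1) :
    IsIdempotentElem ((2⁻¹ : ℂ) • (1 - S)) := by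
  have : (1 - S) * (1 - S) = (2 : ℂ) • (1 - S) := by
    simp only [mul_sub, sub_mul, mul_one, one_mul, hS2, two_smul]; abel
  rw [IsIdempotentElem, smul_mul_smul_comm, this, smul_smul]
  norm_num

theorem mul_half_one_sub_of_anticommute {X : A} (hXS : X * S = -(S * X)) :
    X * ((2⁻¹ : ℂ) • (1 - S)) = ((2⁻¹ : ℂ) • (1 + S)) * X := by
  rw [mul_smul_comm, smul_mul_assoc, mul_sub, add_mul, hXS, mul_one, one_mul, sub_neg_eq_add]

end Involution

theorem correction_mul_eq_zero {A : Type*} [Ring A] {P Q C D ρ : A}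
    (hPQ : P * Q = 0) (hQP : Q * P = 0) (hDQ : D * Q = P * D) :
    (P * ρ * P + C * (Q * ρ * Q) * D) * Q = 0 := by
  have hC : C * (Q * ρ * Q) * D * Q = 0 := by
    rw [mul_assoc, hDQ, ← mul_assoc, mul_assoc C, mul_assoc _ Q P, hQP]
    simp
  rw [add_mul, hC, mul_assoc, hPQ, mul_zero, add_zero]

theorem Matrix.PosSemidef.trace_mul_nonneg_of_isIdempotentElem {n R : Type*} [Fintype n]
    [CommRing R] [PartialOrder R] [StarRing R] [AddLeftMono R]
    {ρ P : Matrix n n R} (hρ : ρ.PosSemidef) (hPH : P.IsHermitian) (hP : IsIdempotentElem P) :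
    0 ≤ (ρ * P).trace := by
  have hconj : (P * ρ * Pᴴ).PosSemidef := hρ.mul_mul_conjTranspose_same P
  rw [hPH.eq] at hconj
  calc (0 : R) ≤ (P * ρ * P).trace := hconj.trace_nonneg
    _ = (ρ * P).trace := by rw [Matrix.trace_mul_cycle, hP.eq, Matrix.trace_mul_comm]

theorem correction_map_energy_lowering_general
    {n : ℕ}
    (S C Pp Pm : Matrix (Fin n) (Fin n) ℂ)
    (hS : S = Sᴴ) (hS2 : S * S = 1)
    (hCS : C * S = -(S * C))
    (hPp : Pp = (2⁻¹ : ℂ) • (1 + S)) (hPm : Pm = (2⁻¹ : ℂ) • (1 - S))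
    (T : Matrix (Fin n) (Fin n) ℂ → Matrix (Fin n) (Fin n) ℂ)
    (hT : ∀ ρ, T ρ = Pp * ρ * Pp + C * (Pm * ρ * Pm) * Cᴴ)
    (ρ : Matrix (Fin n) (Fin n) ℂ) (hρ : ρ.PosSemidef) :
    (T ρ * Pm).trace ≤ (ρ * Pm).trace := by
  subst hPp hPm
  have hCHS : Cᴴ * S = -(S * Cᴴ) := by
    refine neg_eq_iff_eq_neg.mp ?_
    simpa [Matrix.conjTranspose_mul, ← hS] using (congrArg Matrix.conjTranspose hCS).symm
  have hPmH : ((2⁻¹ : ℂ) • (1 - S)).IsHermitian := by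
    simp [Matrix.IsHermitian, Matrix.conjTranspose_smul, ← hS]
  have hTPm : T ρ * ((2⁻¹ : ℂ) • (1 - S)) = 0 := by
    rw [hT]
    exact correction_mul_eq_zero (half_one_add_mul_half_one_sub hS2)
      (half_one_sub_mul_half_one_add hS2) (mul_half_one_sub_of_anticommute hCHS)
  rw [hTPm, Matrix.trace_zero]
  exact hρ.trace_mul_nonneg_of_isIdempotentElem hPmH (isIdempotentElem_half_one_sub hS2)

/-- Energy lowering: for the correction map `T(ρ) = P⁺ ρ P⁺ + C P⁻ ρ P⁻ Cᴴ`
(with `S` a Hermitian unitary involution, `C` unitary with `CS = -SC`, `P± = (I ± S)/2`)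
and every positive semidefinite `ρ`, `tr(T(ρ) P⁻) ≤ tr(ρ P⁻)`. -/
theorem correction_map_energy_lowering
    {n : ℕ} (hn : 1 ≤ n)
    (S C Pp Pm : Matrix (Fin n) (Fin n) ℂ)
    (hS : S = Sᴴ) (hS2 : S * S = 1)
    (hC : C * Cᴴ = 1) (hC' : Cᴴ * C = 1) (hCS : C * S = -(S * C))
    (hPp : Pp = (2⁻¹ : ℂ) • (1 + S)) (hPm : Pm = (2⁻¹ : ℂ) • (1 - S))
    (T : Matrix (Fin n) (Fin n) ℂ → Matrix (Fin n) (Fin n) ℂ)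
    (hT : ∀ ρ, T ρ = Pp * ρ * Pp + C * (Pm * ρ * Pm) * Cᴴ)
    (ρ : Matrix (Fin n) (Fin n) ℂ) (hρ : ρ.PosSemidef) :
    (T ρ * Pm).trace ≤ (ρ * Pm).trace :=
  correction_map_energy_lowering_general S C Pp Pm hS hS2 hCS hPp hPm T hT ρ hρ
end

section
/- Differential inequality for syndrome occupations: fix j ∈ 𝒮 with C_j S_j = −S_j C_j, and assume that for every k ∈ 𝒮 the unitary C_k either commutes or anticommutes with S_j. Then for every positive semidefinite ρ and every t ≥ 0, (d/dt) tr(P_j⁻ · e^{tL}(ρ)) ≤ − tr(P_j⁻ · e^{tL}(ρ)) + Σ_{k ∈ Pred(j)} tr(P_k⁻ · e^{tL}(ρ)), where Pred(j) = {k ∈ 𝒮 : k ≠ j and C_k S_j = −S_j C_k}. -/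
/-!
Write `Pₖ = (1 - Sₖ)/2` and `σ = e^{tL}(ρ)`. The derivative of `tr(Pⱼ e^{tL}(ρ))` is
`tr(Pⱼ L(σ)) = Σₖ tr(Pⱼ (Tₖ(σ) - σ))`. Since `Pⱼ` commutes with `Pₖ`, cycling the trace gives
`tr(Pⱼ (Tₖ(σ) - σ)) = tr((Cₖᴴ Pⱼ Cₖ - Pⱼ) Pₖ σ)`, and `Cₖᴴ Pⱼ Cₖ` is `Pⱼ` or `1 - Pⱼ` according as
`Cₖ` commutes or anticommutes with `Sⱼ`. So the term vanishes in the first case, is `-tr(Pⱼ σ)`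
for `k = j`, and is `tr(Pₖ σ) - 2 tr(Pⱼ Pₖ σ) ≤ tr(Pₖ σ)` for `k ∈ Pred(j)`: `Pⱼ Pₖ` is an
orthogonal projection and `σ ⪰ 0`: `L + |𝒮| id = Σₖ Tₖ` is a sum of positive maps, so
`e^{tL} = e^{-t|𝒮|} e^{t(L + |𝒮| id)}` preserves positivity for `t ≥ 0`.
-/

open scoped Matrix ComplexOrder

attribute [local instance] Matrix.normedAddCommGroup Matrix.normedSpace

/-- Port helper: with the sup-norm matrix instances the topological-ring structure on the
continuous linear endomorphisms (the operator-norm ring) is no longer found by instance search. -/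
instance matrixCLMIsTopologicalRing (n : ℕ) :
    IsTopologicalRing (Matrix (Fin n) (Fin n) ℂ →L[ℂ] Matrix (Fin n) (Fin n) ℂ) :=
  letI : NormedRing (Matrix (Fin n) (Fin n) ℂ →L[ℂ] Matrix (Fin n) (Fin n) ℂ) :=
    ContinuousLinearMap.toNormedRing
  @NonUnitalSeminormedRing.toIsTopologicalRing _ inferInstance

open NormedSpace

theorem mul_mul_eq_of_commute {M : Type*} [Monoid M] {u c x : M} (huc : u * c = 1)
    (hcx : Commute c x) : u * x * c = x := by
  rw [mul_assoc, ← hcx.eq, ← mul_assoc, huc, one_mul]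

theorem mul_mul_eq_neg_of_anticommute {R : Type*} [Ring R] {u c x : R} (huc : u * c = 1)
    (hcx : c * x = -(x * c)) : u * x * c = -x := by
  rw [mul_assoc, ← neg_eq_iff_eq_neg.mpr hcx, mul_neg, ← mul_assoc, huc, one_mul]

section HalfSmul

variable {K A : Type*} [Field K] [Ring A] [Algebra K A] {s t : A}

theorem Commute.half_smul_one_sub_left {x : A} (h : Commute s x) :
    Commute ((2⁻¹ : K) • (1 - s)) x :=
  ((Commute.one_left x).sub_left h).smul_left _

theorem Commute.half_smul_one_sub (h : Commute s t) :
    Commute ((2⁻¹ : K) • (1 - s)) ((2⁻¹ : K) • (1 - t)) :=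
  h.symm.half_smul_one_sub_left.symm.half_smul_one_sub_left

variable [CharZero K]

theorem half_smul_one_add_eq_one_sub (s : A) :
    (2⁻¹ : K) • (1 + s) = 1 - (2⁻¹ : K) • (1 - s) := by
  module

theorem isIdempotentElem_half_smul_one_sub (hs : s * s = 1) :
    IsIdempotentElem ((2⁻¹ : K) • (1 - s)) := by
  simp only [IsIdempotentElem, smul_mul_smul_comm, sub_mul, mul_sub, one_mul, mul_one, hs]
  module

theorem isStarProjection_half_smul_one_sub [StarRing K] [StarRing A] [StarModule K A]
    (hs : IsSelfAdjoint s) (hs2 : s * s = 1) : IsStarProjection ((2⁻¹ : K) • (1 - s)) :=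
  ⟨isIdempotentElem_half_smul_one_sub hs2,
    (by simp [IsSelfAdjoint] : IsSelfAdjoint (2⁻¹ : K)).smul ((IsSelfAdjoint.one A).sub hs)⟩

theorem mul_half_smul_one_sub_mul_of_anticommute {u c : A} (huc : u * c = 1)
    (hcs : c * s = -(s * c)) : u * ((2⁻¹ : K) • (1 - s)) * c = 1 - (2⁻¹ : K) • (1 - s) := by
  rw [mul_smul_comm, smul_mul_assoc, mul_sub, sub_mul, mul_one, huc,
    mul_mul_eq_neg_of_anticommute huc hcs, sub_neg_eq_add, half_smul_one_add_eq_one_sub]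

end HalfSmul

namespace Matrix

theorem trace_mul_sandwich_sub {m R : Type*} [Fintype m] [DecidableEq m] [CommRing R]
    {p r c d σ : Matrix m m R} (hpr : Commute p r) (hr : IsIdempotentElem r)
    (hq : Commute (d * p * c) r) :
    (p * ((1 - r) * σ * (1 - r) + c * (r * σ * r) * d - σ)).trace =
      ((d * p * c - p) * r * σ).trace := by
  have h1 : (p * ((1 - r) * σ * (1 - r))).trace = (p * (1 - r) * σ).trace := by
    calc (p * ((1 - r) * σ * (1 - r))).trace = (p * (1 - r) * σ * (1 - r)).trace := by
          simp only [mul_assoc]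
      _ = ((1 - r) * p * (1 - r) * σ).trace := by
          rw [trace_mul_comm]; simp only [mul_assoc]
      _ = (p * ((1 - r) * (1 - r)) * σ).trace := by
          rw [← ((Commute.one_right p).sub_right hpr).eq]; simp only [mul_assoc]
      _ = (p * (1 - r) * σ).trace := by rw [hr.one_sub.eq]
  have h2 : (p * (c * (r * σ * r) * d)).trace = (d * p * c * r * σ).trace := by
    calc (p * (c * (r * σ * r) * d)).trace = (p * c * r * σ * r * d).trace := by
          simp only [mul_assoc]
      _ = (d * p * c * r * σ * r).trace := by
          rw [trace_mul_comm]; simp only [mul_assoc]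
      _ = (r * (d * p * c) * r * σ).trace := by
          rw [trace_mul_comm]; simp only [mul_assoc]
      _ = (d * p * c * (r * r) * σ).trace := by
          rw [← hq.eq]; simp only [mul_assoc]
      _ = (d * p * c * r * σ).trace := by rw [hr.eq]
  rw [mul_sub, mul_add, trace_sub, trace_add, h1, h2]
  simp only [sub_mul, mul_sub, mul_one, trace_sub]
  ring

variable {m 𝕜 : Type*} [Fintype m] [RCLike 𝕜]

theorem _root_.IsStarProjection.trace_mul_nonneg {q σ : Matrix m m 𝕜} (hq : IsStarProjection q)
    (hσ : σ.PosSemidef) : 0 ≤ (q * σ).trace := by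
  have h := (hσ.mul_mul_conjTranspose_same q).trace_nonneg
  rwa [← star_eq_conjTranspose, hq.isSelfAdjoint.star_eq, trace_mul_cycle, hq.isIdempotentElem.eq]
    at h

theorem isClosed_setOf_posSemidef : IsClosed {A : Matrix m m 𝕜 | A.PosSemidef} := by
  simp_rw [posSemidef_iff_dotProduct_mulVec, Set.ofPred_and, Set.ofPred_forall]
  refine (isClosed_eq (by fun_prop) continuous_id).inter (isClosed_iInter fun x => ?_)
  exact isClosed_le continuous_const (by fun_prop)

variable (m 𝕜) in
def posSemidefAddSubmonoid : AddSubmonoid (Matrix m m 𝕜) where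
  carrier := {A | A.PosSemidef}
  add_mem' := PosSemidef.add
  zero_mem' := PosSemidef.zero

end Matrix

section ExpApply

variable {E : Type*} [NormedAddCommGroup E] [NormedSpace ℂ E] [CompleteSpace E]
  {K : AddSubmonoid E} {Φ : E →L[ℂ] E} {t : ℝ} {x : E}

theorem exp_smul_apply_mem (hK : IsClosed (K : Set E))
    (hsmul : ∀ c : ℝ, 0 ≤ c → ∀ x ∈ K, (c : ℂ) • x ∈ K)
    (hΦ : Set.MapsTo Φ K K) (ht : 0 ≤ t) (hx : x ∈ K) :
    exp ((t : ℂ) • Φ) x ∈ K := by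
  rw [exp_eq_tsum ℂ]
  change ContinuousLinearMap.apply ℂ E x (∑' k : ℕ, _) ∈ K
  rw [ContinuousLinearMap.map_tsum _ (expSeries_summable' _)]
  refine tsum_mem hK fun k => ?_
  have hterm : ((k.factorial : ℂ)⁻¹ • ((t : ℂ) • Φ) ^ k) x =
      (((k.factorial : ℝ)⁻¹ * t ^ k : ℝ) : ℂ) • (Φ^[k]) x := by
    rw [smul_pow, smul_smul, smul_apply, pow_apply_eq_iterate]
    push_cast
    rfl
  rw [ContinuousLinearMap.apply_apply, hterm]
  exact hsmul _ (by positivity) _ (hΦ.iterate k hx)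

theorem exp_smul_apply_mem_of_add_smul_mem (hK : IsClosed (K : Set E))
    (hsmul : ∀ c : ℝ, 0 ≤ c → ∀ x ∈ K, (c : ℂ) • x ∈ K) (c : ℝ)
    (hΦ : ∀ x ∈ K, Φ x + (c : ℂ) • x ∈ K) (ht : 0 ≤ t) (hx : x ∈ K) :
    exp ((t : ℂ) • Φ) x ∈ K := by
  have hsplit : exp ((t : ℂ) • Φ) =
      exp ((t : ℂ) • (Φ + (c : ℂ) • 1)) * algebraMap ℂ _ (exp ((-(t * c) : ℝ) : ℂ)) := by
    have hball (y : E →L[ℂ] E) : y ∈ Metric.eball 0 (expSeries ℂ (E →L[ℂ] E)).radius := by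
      simp [expSeries_radius_eq_top]
    rw [algebraMap_exp_comm, ← exp_add_of_commute_of_mem_ball (Algebra.commutes _ _).symm
      (hball _) (hball _), Algebra.algebraMap_eq_smul_one]
    congr 1
    push_cast
    module
  rw [hsplit, mul_apply_eq_comp, ← Complex.exp_eq_exp_ℂ, ← Complex.ofReal_exp,
    ContinuousLinearMap.algebraMap_apply]
  exact exp_smul_apply_mem hK hsmul hΦ ht (hsmul _ (Real.exp_nonneg _) _ hx)

theorem hasDerivAt_exp_ofReal_smul_apply {F : Type*} [NormedAddCommGroup F] [NormedSpace ℂ F]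
    (f : E →L[ℂ] F) (T : E →L[ℂ] E) (x : E) (t : ℝ) :
    HasDerivAt (fun s : ℝ => f (exp ((s : ℂ) • T) x)) (f (T (exp ((t : ℂ) • T) x))) t := by
  have hexp : HasDerivAt (fun s : ℝ => exp ((s : ℂ) • T)) (T * exp ((t : ℂ) • T)) t := by
    simpa [Function.comp_def] using
      (hasDerivAt_exp_smul_const' T (t : ℂ)).scomp t Complex.ofRealCLM.hasDerivAt
  exact ((f.comp (ContinuousLinearMap.apply ℂ E x)).restrictScalars ℝ).hasFDerivAt.comp_hasDerivAt
    t hexp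

end ExpApply

section SyndromeCorrection

open Matrix

variable {m : Type*} [Fintype m] [DecidableEq m] {S S' C σ : Matrix m m ℂ}

/-- The map `Tⱼ` of the statement, for `S = Sⱼ` and `C = Cⱼ`. -/
noncomputable def syndromeCorrection (S C σ : Matrix m m ℂ) : Matrix m m ℂ :=
  ((2⁻¹ : ℂ) • (1 + S)) * σ * ((2⁻¹ : ℂ) • (1 + S)) +
    C * (((2⁻¹ : ℂ) • (1 - S)) * σ * ((2⁻¹ : ℂ) • (1 - S))) * Cᴴ

theorem Matrix.PosSemidef.syndromeCorrection (hS : S.IsHermitian) (hσ : σ.PosSemidef) :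
    (syndromeCorrection S C σ).PosSemidef := by
  have hhalf : IsSelfAdjoint (2⁻¹ : ℂ) := by simp [IsSelfAdjoint]
  have hplus : ((2⁻¹ : ℂ) • (1 + S))ᴴ = (2⁻¹ : ℂ) • (1 + S) :=
    (hhalf.smul ((IsSelfAdjoint.one _).add hS)).star_eq
  have hminus : ((2⁻¹ : ℂ) • (1 - S))ᴴ = (2⁻¹ : ℂ) • (1 - S) :=
    (hhalf.smul ((IsSelfAdjoint.one _).sub hS)).star_eq
  have h₁ := hσ.mul_mul_conjTranspose_same ((2⁻¹ : ℂ) • (1 + S))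
  have h₂ := hσ.mul_mul_conjTranspose_same (C * ((2⁻¹ : ℂ) • (1 - S)))
  rw [hplus] at h₁
  rw [conjTranspose_mul, hminus] at h₂
  simpa only [_root_.syndromeCorrection, mul_assoc] using h₁.add h₂

theorem trace_mul_syndromeCorrection_sub_of_commute (hS : S * S = 1) (hS'S : Commute S' S)
    (hC : Cᴴ * C = 1) (hCS' : Commute C S') :
    (((2⁻¹ : ℂ) • (1 - S')) * (syndromeCorrection S C σ - σ)).trace = 0 := by
  have hpr := hS'S.half_smul_one_sub (K := ℂ)
  have hconj := mul_mul_eq_of_commute hC (hCS'.symm.half_smul_one_sub_left (K := ℂ)).symm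
  have hq : Commute (Cᴴ * ((2⁻¹ : ℂ) • (1 - S')) * C) ((2⁻¹ : ℂ) • (1 - S)) := by
    rw [hconj]; exact hpr
  rw [syndromeCorrection, half_smul_one_add_eq_one_sub,
    trace_mul_sandwich_sub hpr (isIdempotentElem_half_smul_one_sub hS) hq, hconj,
    sub_self, zero_mul, zero_mul, trace_zero]

theorem trace_mul_syndromeCorrection_sub_of_anticommute (hS : S * S = 1) (hS'S : Commute S' S)
    (hC : Cᴴ * C = 1) (hCS' : C * S' = -(S' * C)) :
    (((2⁻¹ : ℂ) • (1 - S')) * (syndromeCorrection S C σ - σ)).trace =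
      (((2⁻¹ : ℂ) • (1 - S)) * σ).trace -
        2 * (((2⁻¹ : ℂ) • (1 - S')) * ((2⁻¹ : ℂ) • (1 - S)) * σ).trace := by
  have hpr := hS'S.half_smul_one_sub (K := ℂ)
  have hconj := mul_half_smul_one_sub_mul_of_anticommute (K := ℂ) hC hCS'
  have hq : Commute (Cᴴ * ((2⁻¹ : ℂ) • (1 - S')) * C) ((2⁻¹ : ℂ) • (1 - S)) := by
    rw [hconj]; exact (Commute.one_left _).sub_left hpr
  rw [syndromeCorrection, half_smul_one_add_eq_one_sub,
    trace_mul_sandwich_sub hpr (isIdempotentElem_half_smul_one_sub hS) hq, hconj]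
  simp only [sub_mul, one_mul, trace_sub]
  ring

theorem trace_mul_syndromeCorrection_self_sub (hS : S * S = 1) (hC : Cᴴ * C = 1)
    (hCS : C * S = -(S * C)) :
    (((2⁻¹ : ℂ) • (1 - S)) * (syndromeCorrection S C σ - σ)).trace =
      -(((2⁻¹ : ℂ) • (1 - S)) * σ).trace := by
  rw [trace_mul_syndromeCorrection_sub_of_anticommute hS (Commute.refl S) hC hCS,
    (isIdempotentElem_half_smul_one_sub hS).eq]
  ring

theorem trace_mul_syndromeCorrection_sub_le_of_anticommute (hS' : S'.IsHermitian)
    (hS'2 : S' * S' = 1) (hS : S.IsHermitian) (hS2 : S * S = 1) (hS'S : Commute S' S)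
    (hC : Cᴴ * C = 1) (hCS' : C * S' = -(S' * C)) (hσ : σ.PosSemidef) :
    (((2⁻¹ : ℂ) • (1 - S')) * (syndromeCorrection S C σ - σ)).trace ≤
      (((2⁻¹ : ℂ) • (1 - S)) * σ).trace := by
  rw [trace_mul_syndromeCorrection_sub_of_anticommute hS2 hS'S hC hCS']
  have hproj := (isStarProjection_half_smul_one_sub hS' hS'2).mul
    (isStarProjection_half_smul_one_sub hS hS2) (hS'S.half_smul_one_sub (K := ℂ))
  exact sub_le_self _ (mul_nonneg zero_le_two (hproj.trace_mul_nonneg hσ))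

theorem trace_mul_syndromeCorrection_sub_le_ite {ι : Type*} [DecidableEq ι]
    {S C : ι → Matrix m m ℂ} (hS : ∀ k, (S k).IsHermitian) (hS2 : ∀ k, S k * S k = 1)
    (hScomm : ∀ k l, Commute (S k) (S l)) (hC : ∀ k, (C k)ᴴ * C k = 1) {j : ι}
    (hj : C j * S j = -(S j * C j))
    (hcommOrAnti : ∀ k, Commute (C k) (S j) ∨ C k * S j = -(S j * C k)) {Pred : Finset ι}
    (hPred : ∀ k, k ∈ Pred ↔ k ≠ j ∧ C k * S j = -(S j * C k)) (hσ : σ.PosSemidef) (k : ι) :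
    (((2⁻¹ : ℂ) • (1 - S j)) * (syndromeCorrection (S k) (C k) σ - σ)).trace ≤
      (if k = j then -(((2⁻¹ : ℂ) • (1 - S j)) * σ).trace else 0) +
        (if k ∈ Pred then (((2⁻¹ : ℂ) • (1 - S k)) * σ).trace else 0) := by
  rcases eq_or_ne k j with rfl | hkj
  · rw [if_pos rfl, if_neg fun h => ((hPred k).1 h).1 rfl, add_zero,
      trace_mul_syndromeCorrection_self_sub (hS2 k) (hC k) hj]
  by_cases hk : k ∈ Pred
  · rw [if_neg hkj, if_pos hk, zero_add]
    exact trace_mul_syndromeCorrection_sub_le_of_anticommute (hS j) (hS2 j) (hS k) (hS2 k)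
      (hScomm j k) (hC k) ((hPred k).1 hk).2 hσ
  · have hc : Commute (C k) (S j) :=
      (hcommOrAnti k).resolve_right fun h => hk ((hPred k).2 ⟨hkj, h⟩)
    rw [if_neg hkj, if_neg hk, add_zero,
      trace_mul_syndromeCorrection_sub_of_commute (hS2 k) (hScomm j k) (hC k) hc]

theorem posSemidef_exp_smul_apply_of_eq_sum_syndromeCorrection {n : ℕ} {ι : Type*} [Fintype ι]
    {S C : ι → Matrix (Fin n) (Fin n) ℂ} (hS : ∀ k, (S k).IsHermitian)
    {L : Matrix (Fin n) (Fin n) ℂ →ₗ[ℂ] Matrix (Fin n) (Fin n) ℂ}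
    (hL : ∀ τ, L τ = ∑ k, (syndromeCorrection (S k) (C k) τ - τ)) {t : ℝ} (ht : 0 ≤ t)
    {ρ : Matrix (Fin n) (Fin n) ℂ} (hρ : ρ.PosSemidef) :
    (exp ((t : ℂ) • L.toContinuousLinearMap) ρ).PosSemidef := by
  refine exp_smul_apply_mem_of_add_smul_mem (K := posSemidefAddSubmonoid (Fin n) ℂ)
    isClosed_setOf_posSemidef (fun c hc _ hx => hx.smul (RCLike.ofReal_nonneg.mpr hc))
    (Fintype.card ι) (fun τ hτ => ?_) ht hρ
  have hsum : L τ + ((Fintype.card ι : ℝ) : ℂ) • τ = ∑ k, syndromeCorrection (S k) (C k) τ := by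
    rw [hL, Finset.sum_sub_distrib, Finset.sum_const, Finset.card_univ, Complex.ofReal_natCast,
      Nat.cast_smul_eq_nsmul, sub_add_cancel]
  change (L τ + _).PosSemidef
  rw [hsum]
  exact posSemidef_sum _ fun k _ => hτ.syndromeCorrection (hS k)

end SyndromeCorrection

theorem syndrome_occupation_differential_inequality_general
    {n : ℕ} {ι : Type*} [Fintype ι]
    (S C : ι → Matrix (Fin n) (Fin n) ℂ)
    (hSherm : ∀ k, S k = (S k)ᴴ) (hS2 : ∀ k, S k * S k = 1)
    (hScomm : ∀ k l, S k * S l = S l * S k)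
    (hCU' : ∀ k, (C k)ᴴ * C k = 1)
    (Liou : Matrix (Fin n) (Fin n) ℂ →ₗ[ℂ] Matrix (Fin n) (Fin n) ℂ)
    (hLiou : ∀ ρ, Liou ρ =
      ∑ k, (((2⁻¹ : ℂ) • (1 + S k)) * ρ * ((2⁻¹ : ℂ) • (1 + S k)) +
            C k * (((2⁻¹ : ℂ) • (1 - S k)) * ρ * ((2⁻¹ : ℂ) • (1 - S k))) * (C k)ᴴ - ρ))
    (j : ι) (hj : C j * S j = -(S j * C j))
    (hcommOrAnti : ∀ k, C k * S j = S j * C k ∨ C k * S j = -(S j * C k))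
    (Pred : Finset ι) (hPred : ∀ k, k ∈ Pred ↔ k ≠ j ∧ C k * S j = -(S j * C k))
    (ρ : Matrix (Fin n) (Fin n) ℂ) (hρ : ρ.PosSemidef)
    (t : ℝ) (ht : 0 ≤ t) :
    deriv (fun s : ℝ =>
        (((2⁻¹ : ℂ) • (1 - S j)) *
          (NormedSpace.exp ((s : ℂ) • Liou.toContinuousLinearMap) ρ)).trace) t ≤
      -(((2⁻¹ : ℂ) • (1 - S j)) *
          (NormedSpace.exp ((t : ℂ) • Liou.toContinuousLinearMap) ρ)).trace +
      ∑ k ∈ Pred, (((2⁻¹ : ℂ) • (1 - S k)) *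
          (NormedSpace.exp ((t : ℂ) • Liou.toContinuousLinearMap) ρ)).trace := by
  classical
  set σ := exp ((t : ℂ) • Liou.toContinuousLinearMap) ρ
  have hL : ∀ τ, Liou τ = ∑ k, (syndromeCorrection (S k) (C k) τ - τ) := hLiou
  have hσ : σ.PosSemidef :=
    posSemidef_exp_smul_apply_of_eq_sum_syndromeCorrection (fun k => (hSherm k).symm) hL ht hρ
  calc _ = (((2⁻¹ : ℂ) • (1 - S j)) * Liou σ).trace :=
        (hasDerivAt_exp_ofReal_smul_apply ((Matrix.traceLinearMap (Fin n) ℂ ℂ).comp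
          (LinearMap.mulLeft ℂ ((2⁻¹ : ℂ) • (1 - S j)))).toContinuousLinearMap _ ρ t).deriv
    _ = ∑ k, (((2⁻¹ : ℂ) • (1 - S j)) * (syndromeCorrection (S k) (C k) σ - σ)).trace := by
        rw [hL, Finset.mul_sum, Matrix.trace_sum]
    _ ≤ _ := Finset.sum_le_sum fun k _ => trace_mul_syndromeCorrection_sub_le_ite
        (fun k => (hSherm k).symm) hS2 hScomm hCU' hj hcommOrAnti hPred hσ k
    _ = _ := by
        rw [Finset.sum_add_distrib, Finset.sum_ite_eq', Finset.sum_ite_mem, Finset.univ_inter,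
          if_pos (Finset.mem_univ j)]

/-- Differential inequality for syndrome occupations: for the Liouvillian
`L(ρ) = Σ_k (P_k⁺ ρ P_k⁺ + C_k P_k⁻ ρ P_k⁻ C_kᴴ − ρ)` built from pairwise commuting
Hermitian unitary involutions `S_k` and unitaries `C_k`, and a fixed `j` with
`C_j S_j = −S_j C_j` such that every `C_k` either commutes or anticommutes with `S_j`,
every positive semidefinite `ρ` and `t ≥ 0` satisfy
`(d/dt) tr(P_j⁻ e^{tL}(ρ)) ≤ −tr(P_j⁻ e^{tL}(ρ)) + Σ_{k ∈ Pred(j)} tr(P_k⁻ e^{tL}(ρ))`. -/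
theorem syndrome_occupation_differential_inequality
    {n : ℕ} (hn : 1 ≤ n) {ι : Type*} [Fintype ι]
    (S C : ι → Matrix (Fin n) (Fin n) ℂ)
    (hSherm : ∀ k, S k = (S k)ᴴ) (hS2 : ∀ k, S k * S k = 1)
    (hScomm : ∀ k l, S k * S l = S l * S k)
    (hCU : ∀ k, C k * (C k)ᴴ = 1) (hCU' : ∀ k, (C k)ᴴ * C k = 1)
    (Liou : Matrix (Fin n) (Fin n) ℂ →ₗ[ℂ] Matrix (Fin n) (Fin n) ℂ)
    (hLiou : ∀ ρ, Liou ρ =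
      ∑ k, (((2⁻¹ : ℂ) • (1 + S k)) * ρ * ((2⁻¹ : ℂ) • (1 + S k)) +
            C k * (((2⁻¹ : ℂ) • (1 - S k)) * ρ * ((2⁻¹ : ℂ) • (1 - S k))) * (C k)ᴴ - ρ))
    (j : ι) (hj : C j * S j = -(S j * C j))
    (hcommOrAnti : ∀ k, C k * S j = S j * C k ∨ C k * S j = -(S j * C k))
    (Pred : Finset ι) (hPred : ∀ k, k ∈ Pred ↔ k ≠ j ∧ C k * S j = -(S j * C k))
    (ρ : Matrix (Fin n) (Fin n) ℂ) (hρ : ρ.PosSemidef)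
    (t : ℝ) (ht : 0 ≤ t) :
    deriv (fun s : ℝ =>
        (((2⁻¹ : ℂ) • (1 - S j)) *
          (NormedSpace.exp ((s : ℂ) • Liou.toContinuousLinearMap) ρ)).trace) t ≤
      -(((2⁻¹ : ℂ) • (1 - S j)) *
          (NormedSpace.exp ((t : ℂ) • Liou.toContinuousLinearMap) ρ)).trace +
      ∑ k ∈ Pred, (((2⁻¹ : ℂ) • (1 - S k)) *
          (NormedSpace.exp ((t : ℂ) • Liou.toContinuousLinearMap) ρ)).trace :=
  syndrome_occupation_differential_inequality_general S C hSherm hS2 hScomm hCU' Liou hLiou j hj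
    hcommOrAnti Pred hPred ρ hρ t ht
end
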